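/- Let n ≥ 1 and let (f_k) be a sequence of holomorphic functions on the open unit ball B of ℂⁿ with sup_k ‖f_k‖ ≤ M < ∞ in the Zygmund norm. If f_k converges to 0 uniformly on every compact subset of B as k → ∞, then lim_{k→∞} sup_{z∈B}|f_k(z)| = 0, i.e. f_k converges to 0 uniformly on all of B. (Lemma 3.) -/

import Mathlib

/-!
A Zygmund bound `(1 - |w|²)|R(Rf)(w)| ≤ M` makes `Rf` a Bloch function: integrating along the ray
through `z` gives `|Rf(tz)| ≤ A - 2M log(1 - t)` for `1/2 ≤ t < 1`, where `A` bounds `Rf` at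
`z/2`. Integrating once more, `|f(z) - f(rz)| ≤ (1 - r)(2A + 4M(1 - log(1 - r)))`, which tends to
`0` as `r → 1`. Convergence on compact sets makes `A` uniform in `k` (Cauchy estimates on the ball
of radius `3/4`) and `f_k(rz)` small, so `f_k → 0` uniformly on the whole ball.

That `Rf` is holomorphic again follows from Cauchy's formula on complex lines, differentiated
under the integral sign.
-/

open MeasureTheory Metric Filter

noncomputable section

/-- `E n` is `ℂⁿ` with the Euclidean structure. -/
abbrev E (n : ℕ) := EuclideanSpace ℂ (Fin n)

/-- The open unit ball of `ℂⁿ`. -/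
def uball (n : ℕ) : Set (E n) := Metric.ball 0 1

/-- The radial derivative `Rf(z) = ∑ z_j ∂f/∂z_j(z)`. -/
def rad (n : ℕ) (f : E n → ℂ) (z : E n) : ℂ :=
  ∑ j : Fin n, z j * fderiv ℂ f z (EuclideanSpace.single j 1)

/-- The set of values `(1-|z|²)|R(Rf)(z)|`, `z ∈ B`. -/
def zygSet (n : ℕ) (f : E n → ℂ) : Set ℝ :=
  {x | ∃ z ∈ uball n, x = (1 - ‖z‖ ^ 2) * ‖rad n (rad n f) z‖}

/-- Membership in the Zygmund space: `sup_{z∈B} (1-|z|²)|R(Rf)(z)| < ∞`. -/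
def memZ (n : ℕ) (f : E n → ℂ) : Prop := BddAbove (zygSet n f)

/-- The Zygmund norm `‖f‖ = |f(0)| + sup_{z∈B} (1-|z|²)|R(Rf)(z)|`. -/
def zygNorm (n : ℕ) (f : E n → ℂ) : ℝ :=
  ‖f 0‖ + sSup (zygSet n f)

/-- The extended Cesàro operator `T_g f(z) = ∫₀¹ f(tz) Rg(tz) dt/t`. -/
def Tg (n : ℕ) (g f : E n → ℂ) (z : E n) : ℂ :=
  ∫ t in (0:ℝ)..1, f (t • z) * rad n g (t • z) / (t : ℂ)

/-- The operator `I_g f(z) = ∫₀¹ Rf(tz) g(tz) dt/t`. -/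
def Ig (n : ℕ) (g f : E n → ℂ) (z : E n) : ℂ :=
  ∫ t in (0:ℝ)..1, rad n f (t • z) * g (t • z) / (t : ℂ)

open Set Topology

section Holomorphic

open Complex Real

variable {V G : Type*} [NormedAddCommGroup V] [NormedSpace ℂ V]
  [NormedAddCommGroup G] [NormedSpace ℂ G]

theorem norm_fderiv_le_of_forall_norm_le {f : V → G} {c : V} {R B : ℝ}
    (hd : DifferentiableOn ℂ f (ball c R)) (hR : 0 < R) (hB : ∀ x ∈ ball c R, ‖f x‖ ≤ B) :
    ‖fderiv ℂ f c‖ ≤ 2 * B / R := by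
  refine Complex.norm_fderiv_le_div_of_mapsTo_ball hd (fun x hx => ?_) hR
  rw [mem_closedBall, two_mul]
  exact (dist_le_norm_add_norm _ _).trans (add_le_add (hB x hx) (hB c (mem_ball_self hR)))

theorem DifferentiableOn.exists_ball_norm_fderiv_le {U : Set V} {f : V → G} (hU : IsOpen U)
    (hf : DifferentiableOn ℂ f U) {w : V} (hw : w ∈ U) :
    ∃ δ > 0, ball w δ ⊆ U ∧ ∃ C, ∀ y ∈ ball w δ, ‖fderiv ℂ f y‖ ≤ C := by
  have hnear : ∀ᶠ y in 𝓝 w, y ∈ U ∧ ‖f y‖ < ‖f w‖ + 1 :=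
    (hU.eventually_mem hw).and ((hf.continuousOn.continuousAt (hU.mem_nhds hw)).norm.eventually
      (gt_mem_nhds (lt_add_one _)))
  obtain ⟨ε, hε, hball⟩ := Metric.eventually_nhds_iff_ball.1 hnear
  refine ⟨ε / 2, half_pos hε, fun y hy => (hball y (ball_subset_ball (by linarith) hy)).1,
    2 * (‖f w‖ + 1) / (ε / 2), fun y hy => ?_⟩
  have hsub : ball y (ε / 2) ⊆ ball w ε := ball_subset_ball' (by rw [mem_ball] at hy; linarith)
  exact norm_fderiv_le_of_forall_norm_le (hf.mono fun x hx => (hball x (hsub hx)).1)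
    (half_pos hε) fun x hx => (hball x (hsub hx)).2.le

theorem circleIntegral_one_div_sq_smul_line_eq [CompleteSpace G] {f : V → G} {x v : V} {ρ : ℝ}
    (hρ : 0 < ρ) (hf : ∀ z ∈ closedBall (0 : ℂ) ρ, DifferentiableAt ℂ f (x + z • v)) :
    ∮ z in C(0, ρ), (1 / z ^ 2) • f (x + z • v) = (2 * π * I) • fderiv ℂ f x v := by
  have hline : ∀ z : ℂ, DifferentiableAt ℂ f (x + z • v) →
      HasDerivAt (fun z : ℂ => f (x + z • v)) (fderiv ℂ f (x + z • v) v) z := fun z hz => by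
    have hpath : HasDerivAt (fun z : ℂ => x + z • v) v z := by
      simpa using ((hasDerivAt_id z).smul_const v).const_add x
    exact hz.hasFDerivAt.comp_hasDerivAt z hpath
  have h := DifferentiableOn.deriv_eq_smul_circleIntegral hρ
    (fun z hz => (hline z (hf z hz)).differentiableAt.differentiableWithinAt)
  simp only [sub_zero] at h
  rw [h, (hline 0 (hf 0 (mem_closedBall_self hρ.le))).deriv, zero_smul, add_zero]

theorem continuous_deriv_circleMap_mul_one_div_sq {ρ : ℝ} (hρ : ρ ≠ 0) :
    Continuous fun θ => deriv (circleMap 0 ρ) θ * (1 / circleMap 0 ρ θ ^ 2) := by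
  simp only [deriv_circleMap]
  exact ((continuous_circleMap 0 ρ).mul continuous_const).mul
    (continuous_const.div ((continuous_circleMap 0 ρ).pow 2)
      fun θ => pow_ne_zero 2 (circleMap_ne_center hρ))

theorem norm_deriv_circleMap_mul_one_div_sq {ρ : ℝ} (hρ : 0 < ρ) (θ : ℝ) :
    ‖deriv (circleMap 0 ρ) θ * (1 / circleMap 0 ρ θ ^ 2)‖ = ρ⁻¹ := by
  simp [abs_of_pos hρ, sq, hρ.ne']

theorem differentiableAt_circleIntegral_one_div_sq_smul_line [FiniteDimensional ℂ V]
    [CompleteSpace G] [SecondCountableTopology G] {f : V → G} {w v : V} {ε ρ C : ℝ}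
    (hε : 0 < ε) (hρ : 0 < ρ)
    (hf : ∀ x ∈ ball w ε, ∀ z ∈ sphere (0 : ℂ) ρ, DifferentiableAt ℂ f (x + z • v))
    (hC : ∀ x ∈ ball w ε, ∀ z ∈ sphere (0 : ℂ) ρ, ‖fderiv ℂ f (x + z • v)‖ ≤ C) :
    DifferentiableAt ℂ (fun x => ∮ z in C(0, ρ), (1 / z ^ 2) • f (x + z • v)) w := by
  -- `V →L[ℂ] G` is second countable, so the Borel measurable `fderiv ℂ f` is strongly measurable.
  borelize V (V →L[ℂ] G)
  set c := circleMap 0 ρ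
  set k : ℝ → ℂ := fun θ => deriv c θ * (1 / c θ ^ 2)
  have hc : ∀ θ, c θ ∈ sphere (0 : ℂ) ρ := circleMap_mem_sphere 0 hρ.le
  have hk : Continuous k := continuous_deriv_circleMap_mul_one_div_sq hρ.ne'
  have hline : Continuous fun θ => w + c θ • v := by fun_prop
  have hcont : ∀ x ∈ ball w ε,
      Continuous fun θ => deriv c θ • ((1 / c θ ^ 2) • f (x + c θ • v)) := fun x hx => by
    simp only [smul_smul]
    exact hk.smul (continuous_iff_continuousAt.2 fun θ =>
      (hf x hx _ (hc θ)).continuousAt.comp_of_eq (by fun_prop) rfl)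
  have hderiv := intervalIntegral.hasFDerivAt_integral_of_dominated_of_fderiv_le
    (μ := volume) (a := 0) (b := 2 * π) (bound := fun _ => ρ⁻¹ * C)
    (F' := fun x θ => k θ • fderiv ℂ f (x + c θ • v))
    (ball_mem_nhds w hε)
    (eventually_of_mem (ball_mem_nhds w hε) fun x hx => (hcont x hx).aestronglyMeasurable)
    ((hcont w (mem_ball_self hε)).intervalIntegrable _ _)
    (hk.aestronglyMeasurable.smul
      ((measurable_fderiv ℂ f).comp hline.measurable).aestronglyMeasurable)
    (Eventually.of_forall fun θ _ x hx => by
      rw [norm_smul, norm_deriv_circleMap_mul_one_div_sq hρ]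
      exact mul_le_mul_of_nonneg_left (hC x hx _ (hc θ)) (inv_nonneg.2 hρ.le))
    intervalIntegrable_const
    (Eventually.of_forall fun θ _ x hx => by
      have hinner : HasFDerivAt (fun y : V => y + c θ • v) (ContinuousLinearMap.id ℂ V) x :=
        (hasFDerivAt_id x).add_const _
      have := ((hf x hx _ (hc θ)).hasFDerivAt.comp x hinner).const_smul (k θ)
      rw [ContinuousLinearMap.comp_id] at this
      simp only [smul_smul]
      exact this)
  exact hderiv.differentiableAt

theorem DifferentiableOn.fderiv_apply [FiniteDimensional ℂ V] [CompleteSpace G]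
    [SecondCountableTopology G] {U : Set V} {f : V → G} (hU : IsOpen U)
    (hf : DifferentiableOn ℂ f U) (v : V) : DifferentiableOn ℂ (fun w => fderiv ℂ f w v) U := by
  intro w hw
  obtain ⟨δ, hδ, hδU, C, hC⟩ := hf.exists_ball_norm_fderiv_le hU hw
  set ρ := δ / (2 * (‖v‖ + 1))
  have hρ : 0 < ρ := by positivity
  have hline : ∀ x ∈ ball w (δ / 2), ∀ z ∈ closedBall (0 : ℂ) ρ, x + z • v ∈ ball w δ := by
    intro x hx z hz
    rw [mem_closedBall_zero_iff] at hz
    rw [mem_ball, dist_eq_norm] at hx ⊢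
    have hρv : ρ * ‖v‖ ≤ δ / 2 := by
      rw [div_mul_eq_mul_div, div_le_div_iff₀ (by positivity) two_pos]
      nlinarith [norm_nonneg v]
    calc ‖x + z • v - w‖ ≤ ‖x - w‖ + ‖z‖ * ‖v‖ := by
          rw [add_sub_right_comm, ← norm_smul]; exact norm_add_le _ _
      _ < δ / 2 + ρ * ‖v‖ := add_lt_add_of_lt_of_le hx (by gcongr)
      _ ≤ δ := by linarith
  have hdiff : ∀ x ∈ ball w (δ / 2), ∀ z ∈ closedBall (0 : ℂ) ρ,
      DifferentiableAt ℂ f (x + z • v) :=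
    fun x hx z hz => hf.differentiableAt (hU.mem_nhds (hδU (hline x hx z hz)))
  have hrepr : (fun x => fderiv ℂ f x v) =ᶠ[𝓝 w]
      fun x => (2 * π * I)⁻¹ • ∮ z in C(0, ρ), (1 / z ^ 2) • f (x + z • v) :=
    eventually_of_mem (ball_mem_nhds w (half_pos hδ)) fun x hx => by
      dsimp only
      rw [circleIntegral_one_div_sq_smul_line_eq hρ (hdiff x hx), smul_smul,
        inv_mul_cancel₀ two_pi_I_ne_zero, one_smul]
  have hintegral := differentiableAt_circleIntegral_one_div_sq_smul_line (half_pos hδ) hρ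
    (fun x hx z hz => hdiff x hx z (sphere_subset_closedBall hz))
    (fun x hx z hz => hC _ (hline x hx z (sphere_subset_closedBall hz)))
  exact ((hintegral.const_smul _).congr_of_eventuallyEq hrepr).differentiableWithinAt

theorem DifferentiableAt.hasDerivAt_comp_smul {g : V → G} {z : V} {t : ℝ}
    (hg : DifferentiableAt ℂ g (t • z)) :
    HasDerivAt (fun s : ℝ => g (s • z)) (fderiv ℂ g (t • z) z) t := by
  have hray : HasDerivAt (fun s : ℝ => s • z) z t := by
    simpa using (hasDerivAt_id t).smul_const z
  exact (hg.hasFDerivAt.restrictScalars ℝ).comp_hasDerivAt t hray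

end Holomorphic

open Real

theorem norm_sub_le_sub_of_norm_deriv_le_deriv {G : Type*} [NormedAddCommGroup G]
    [NormedSpace ℝ G] {φ φ' : ℝ → G} {β β' : ℝ → ℝ} {a b : ℝ} (hab : a ≤ b)
    (hφ : ContinuousOn φ (Icc a b)) (hφ' : ∀ x ∈ Ico a b, HasDerivWithinAt φ (φ' x) (Ici x) x)
    (hβ : ContinuousOn β (Icc a b)) (hβ' : ∀ x ∈ Ico a b, HasDerivWithinAt β (β' x) (Ici x) x)
    (bound : ∀ x ∈ Ico a b, ‖φ' x‖ ≤ β' x) : ‖φ b - φ a‖ ≤ β b - β a :=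
  image_norm_le_of_norm_deriv_right_le_deriv_boundary' (hφ.sub continuousOn_const)
    (fun x hx => (hφ' x hx).sub_const _) (by simp) (hβ.sub continuousOn_const)
    (fun x hx => (hβ' x hx).sub_const _) bound (right_mem_Icc.2 hab)

theorem tendsto_mul_one_sub_log (a b : ℝ) :
    Tendsto (fun s => s * (a + b * (1 - log s))) (𝓝[>] 0) (𝓝 0) := by
  have hcont : Continuous fun s => s * (a + b * (1 - log s)) := by
    have : (fun s => s * (a + b * (1 - log s))) = fun s => (a + b) * s - b * (s * log s) := by
      ext s; ring
    rw [this]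
    exact (continuous_const.mul continuous_id).sub (continuous_const.mul continuous_mul_log)
  simpa using (hcont.tendsto 0).mono_left nhdsWithin_le_nhds

section Radial

variable {n : ℕ}

theorem smul_mem_uball {z : E n} (hz : z ∈ uball n) {t : ℝ} (ht0 : 0 ≤ t) (ht1 : t ≤ 1) :
    t • z ∈ uball n := by
  rw [uball, mem_ball_zero_iff] at hz ⊢
  rw [norm_smul, Real.norm_of_nonneg ht0]
  nlinarith [norm_nonneg z]

theorem rad_eq_fderiv_apply (f : E n → ℂ) (w : E n) : rad n f w = fderiv ℂ f w w := by
  have hw := (EuclideanSpace.basisFun (Fin n) ℂ).sum_repr w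
  simp only [EuclideanSpace.basisFun_apply, EuclideanSpace.basisFun_repr] at hw
  calc rad n f w = fderiv ℂ f w (∑ j, w j • EuclideanSpace.single j 1) := by
        simp [rad, smul_eq_mul]
    _ = fderiv ℂ f w w := by rw [hw]

theorem rad_zero (f : E n → ℂ) : rad n f 0 = 0 := by
  simp [rad_eq_fderiv_apply]

theorem rad_smul (f : E n → ℂ) (t : ℝ) (z : E n) :
    rad n f (t • z) = t • fderiv ℂ f (t • z) z := by
  rw [rad_eq_fderiv_apply, (fderiv ℂ f (t • z)).map_smul_of_tower]

theorem differentiableOn_rad {f : E n → ℂ} {U : Set (E n)} (hU : IsOpen U)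
    (hf : DifferentiableOn ℂ f U) : DifferentiableOn ℂ (rad n f) U := by
  unfold rad
  refine DifferentiableOn.fun_sum fun j _ => DifferentiableOn.mul ?_ (hf.fderiv_apply hU _)
  exact (EuclideanSpace.proj (𝕜 := ℂ) j).differentiableOn

theorem norm_rad_le_of_forall_norm_le {f : E n → ℂ} {w : E n} {R B : ℝ}
    (hd : DifferentiableOn ℂ f (ball w R)) (hR : 0 < R) (hB : ∀ x ∈ ball w R, ‖f x‖ ≤ B) :
    ‖rad n f w‖ ≤ 2 * B / R * ‖w‖ := by
  rw [rad_eq_fderiv_apply]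
  exact ((fderiv ℂ f w).le_opNorm w).trans (mul_le_mul_of_nonneg_right
    (norm_fderiv_le_of_forall_norm_le hd hR hB) (norm_nonneg w))

theorem norm_apply_smul_le_of_bloch {g : E n → ℂ} {M : ℝ} (hg : DifferentiableOn ℂ g (uball n))
    (hZ : ∀ w ∈ uball n, (1 - ‖w‖ ^ 2) * ‖rad n g w‖ ≤ M) {z : E n} (hz : z ∈ uball n)
    {t : ℝ} (ht : 2⁻¹ ≤ t) (ht1 : t < 1) :
    ‖g (t • z)‖ ≤ ‖g ((2⁻¹ : ℝ) • z)‖ - 2 * M * log (1 - t) := by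
  have hM : 0 ≤ M := by simpa [rad_zero] using hZ 0 (mem_ball_self one_pos)
  have hz1 : ‖z‖ ≤ 1 := (mem_ball_zero_iff.1 hz).le
  have hray : ∀ s ∈ Icc 2⁻¹ t, HasDerivAt (fun s : ℝ => g (s • z)) (fderiv ℂ g (s • z) z) s :=
    fun s hs => (hg.differentiableAt (isOpen_ball.mem_nhds
      (smul_mem_uball hz (by linarith [hs.1]) (by linarith [hs.2])))).hasDerivAt_comp_smul
  have hlog : ∀ s < 1, HasDerivAt (fun s => -2 * M * log (1 - s)) (2 * M / (1 - s)) s := by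
    intro s hs
    have hsub : HasDerivAt (fun s : ℝ => 1 - s) (-1) s := by
      simpa using (hasDerivAt_id s).const_sub 1
    exact ((hsub.log (by linarith : 0 < 1 - s).ne').const_mul (-2 * M)).congr_deriv (by ring)
  have hbound : ∀ s ∈ Ico 2⁻¹ t, ‖fderiv ℂ g (s • z) z‖ ≤ 2 * M / (1 - s) := by
    intro s ⟨hs, hst⟩
    have hZs := hZ (s • z) (smul_mem_uball hz (by linarith) (by linarith))
    rw [rad_smul, norm_smul, norm_smul, Real.norm_of_nonneg (by linarith)] at hZs
    rw [le_div_iff₀ (by linarith)]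
    set D := ‖fderiv ℂ g (s • z) z‖
    have hzs : (s * ‖z‖) ^ 2 ≤ s :=
      calc (s * ‖z‖) ^ 2 = s ^ 2 * ‖z‖ ^ 2 := by ring
        _ ≤ s ^ 2 * 1 := by gcongr; exact pow_le_one₀ (norm_nonneg z) hz1
        _ ≤ s := by nlinarith
    calc D * (1 - s) ≤ D * (1 - (s * ‖z‖) ^ 2) := by gcongr
      _ ≤ 2 * ((1 - (s * ‖z‖) ^ 2) * (s * D)) := by
        nlinarith [mul_nonneg (mul_nonneg (by linarith : 0 ≤ 1 - (s * ‖z‖) ^ 2)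
          (norm_nonneg (fderiv ℂ g (s • z) z))) (by linarith : 0 ≤ 2 * s - 1)]
      _ ≤ 2 * M := by linarith
  have hgrowth := norm_sub_le_sub_of_norm_deriv_le_deriv (β := fun s => -2 * M * log (1 - s)) ht
    (fun s hs => (hray s hs).continuousAt.continuousWithinAt)
    (fun s hs => (hray s (Ico_subset_Icc_self hs)).hasDerivWithinAt)
    (fun s hs => (hlog s (hs.2.trans_lt ht1)).continuousAt.continuousWithinAt)
    (fun s hs => (hlog s (hs.2.trans ht1)).hasDerivWithinAt) hbound
  have hhalf : M * log (1 - 2⁻¹) ≤ 0 :=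
    mul_nonpos_of_nonneg_of_nonpos hM (log_nonpos (by norm_num) (by norm_num))
  linarith [norm_le_insert' (g (t • z)) (g ((2⁻¹ : ℝ) • z))]

theorem norm_sub_apply_smul_le_of_norm_rad_le {f : E n → ℂ} {A K : ℝ}
    (hf : DifferentiableOn ℂ f (uball n)) {z : E n} (hz : z ∈ uball n)
    (hrad : ∀ t ∈ Ico (2⁻¹ : ℝ) 1, ‖rad n f (t • z)‖ ≤ A - K * log (1 - t))
    {r : ℝ} (hr : 2⁻¹ ≤ r) (hr1 : r ≤ 1) :
    ‖f z - f (r • z)‖ ≤ (1 - r) * (2 * A + 2 * K * (1 - log (1 - r))) := by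
  have hray : ∀ t ∈ Icc r 1, HasDerivAt (fun t : ℝ => f (t • z)) (fderiv ℂ f (t • z) z) t :=
    fun t ht => (hf.differentiableAt (isOpen_ball.mem_nhds
      (smul_mem_uball hz (by linarith [ht.1]) ht.2))).hasDerivAt_comp_smul
  -- a primitive of `2A - 2K log (1 - t)` that is still continuous at `t = 1`
  set β : ℝ → ℝ := fun t => 2 * A * t + 2 * K * ((1 - t) * log (1 - t) - (1 - t))
  have hβ : Continuous β := by
    have : Continuous fun t : ℝ => (1 - t) * log (1 - t) :=
      continuous_mul_log.comp (continuous_const.sub continuous_id)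
    fun_prop
  have hβ' : ∀ t < 1, HasDerivAt β (2 * A - 2 * K * log (1 - t)) t := by
    intro t ht
    have hsub : HasDerivAt (fun t : ℝ => 1 - t) (-1) t := by
      simpa using (hasDerivAt_id t).const_sub 1
    have hmul := (hasDerivAt_mul_log (by linarith : 1 - t ≠ 0)).comp t hsub
    exact (((hasDerivAt_id t).const_mul (2 * A)).add
      ((hmul.sub hsub).const_mul (2 * K))).congr_deriv (by simp; ring)
  have hbound : ∀ t ∈ Ico r 1, ‖fderiv ℂ f (t • z) z‖ ≤ 2 * A - 2 * K * log (1 - t) := by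
    intro t ⟨htr, ht1⟩
    have h := hrad t ⟨hr.trans htr, ht1⟩
    rw [rad_smul, norm_smul, Real.norm_of_nonneg (by linarith)] at h
    nlinarith [norm_nonneg (fderiv ℂ f (t • z) z)]
  have h := norm_sub_le_sub_of_norm_deriv_le_deriv hr1
    (fun t ht => (hray t ht).continuousAt.continuousWithinAt)
    (fun t ht => (hray t (Ico_subset_Icc_self ht)).hasDerivWithinAt)
    hβ.continuousOn (fun t ht => (hβ' t ht.2).hasDerivWithinAt) hbound
  rw [one_smul] at h
  refine h.trans_eq ?_
  simp only [β, sub_self, zero_mul]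
  ring

theorem norm_sub_apply_smul_le_of_zygmund {f : E n → ℂ} {M A : ℝ}
    (hf : DifferentiableOn ℂ f (uball n))
    (hZ : ∀ w ∈ uball n, (1 - ‖w‖ ^ 2) * ‖rad n (rad n f) w‖ ≤ M) {z : E n} (hz : z ∈ uball n)
    (hA : ‖rad n f ((2⁻¹ : ℝ) • z)‖ ≤ A) {r : ℝ} (hr : 2⁻¹ ≤ r) (hr1 : r ≤ 1) :
    ‖f z - f (r • z)‖ ≤ (1 - r) * (2 * A + 4 * M * (1 - log (1 - r))) := by
  have hrad : ∀ t ∈ Ico (2⁻¹ : ℝ) 1, ‖rad n f (t • z)‖ ≤ A - 2 * M * log (1 - t) := fun t ht =>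
    (norm_apply_smul_le_of_bloch (differentiableOn_rad isOpen_ball hf) hZ hz ht.1 ht.2).trans
      (by linarith)
  exact (norm_sub_apply_smul_le_of_norm_rad_le hf hz hrad hr hr1).trans_eq (by ring)

theorem mul_norm_rad_rad_le_of_zygNorm_le {f : E n → ℂ} {M : ℝ} (hf : memZ n f)
    (hM : zygNorm n f ≤ M) {w : E n} (hw : w ∈ uball n) :
    (1 - ‖w‖ ^ 2) * ‖rad n (rad n f) w‖ ≤ M := by
  have := le_csSup hf ⟨w, hw, rfl⟩
  rw [zygNorm] at hM
  linarith [norm_nonneg (f 0)]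

theorem norm_rad_half_smul_le {f : E n → ℂ} (hf : DifferentiableOn ℂ f (uball n))
    (h₁ : ∀ u ∈ closedBall (0 : E n) (3 / 4), ‖f u‖ ≤ 1) {z : E n} (hz : z ∈ uball n) :
    ‖rad n f ((2⁻¹ : ℝ) • z)‖ ≤ 4 := by
  have hhalf : ‖(2⁻¹ : ℝ) • z‖ < 2⁻¹ := by
    rw [norm_smul, Real.norm_of_nonneg (by norm_num)]
    linarith [mem_ball_zero_iff.1 hz]
  have hnear : ball ((2⁻¹ : ℝ) • z) 4⁻¹ ⊆ closedBall 0 (3 / 4) := by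
    refine (ball_subset_ball' ?_).trans ball_subset_closedBall
    rw [dist_zero_right]; linarith
  have h := norm_rad_le_of_forall_norm_le
    (hf.mono (hnear.trans (closedBall_subset_ball (by norm_num)))) (by norm_num)
    fun x hx => h₁ x (hnear hx)
  nlinarith [norm_nonneg ((2⁻¹ : ℝ) • z)]

theorem norm_lt_of_zygmund {f : E n → ℂ} {M η s : ℝ} (hf : DifferentiableOn ℂ f (uball n))
    (hZ : ∀ w ∈ uball n, (1 - ‖w‖ ^ 2) * ‖rad n (rad n f) w‖ ≤ M)
    (h₁ : ∀ u ∈ closedBall (0 : E n) (3 / 4), ‖f u‖ ≤ 1) (hs0 : 0 ≤ s) (hs : s ≤ 2⁻¹)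
    (hη : ∀ u ∈ closedBall (0 : E n) (1 - s), ‖f u‖ < η) {z : E n} (hz : z ∈ uball n) :
    ‖f z‖ < η + s * (8 + 4 * M * (1 - log s)) := by
  have hosc := norm_sub_apply_smul_le_of_zygmund hf hZ hz (norm_rad_half_smul_le hf h₁ hz)
    (r := 1 - s) (by linarith) (by linarith)
  rw [sub_sub_cancel] at hosc
  have hinner : ‖f ((1 - s) • z)‖ < η := by
    refine hη _ ?_
    rw [mem_closedBall_zero_iff, norm_smul, Real.norm_of_nonneg (by linarith)]
    nlinarith [mem_ball_zero_iff.1 hz, norm_nonneg z]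
  calc ‖f z‖ ≤ ‖f ((1 - s) • z)‖ + ‖f z - f ((1 - s) • z)‖ := norm_le_insert' _ _
    _ < η + s * (8 + 4 * M * (1 - log s)) := by linarith

end Radial

theorem unif_conv_on_ball_general (n : ℕ) (f : ℕ → E n → ℂ)
    (hf : ∀ k, DifferentiableOn ℂ (f k) (uball n))
    (M : ℝ) (hM : ∀ k, memZ n (f k) ∧ zygNorm n (f k) ≤ M)
    (hconv : ∀ K : Set (E n), IsCompact K → K ⊆ uball n →
      TendstoUniformlyOn (fun k z => f k z) 0 atTop K) :
    TendstoUniformlyOn (fun k z => f k z) 0 atTop (uball n) := by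
  rw [Metric.tendstoUniformlyOn_iff]
  intro ε hε
  obtain ⟨s, hsε, hs0, hs⟩ : ∃ s, s * (8 + 4 * M * (1 - log s)) < ε / 2 ∧ 0 < s ∧ s < 2⁻¹ :=
    (((tendsto_mul_one_sub_log _ _).eventually (gt_mem_nhds (half_pos hε))).and
      (Ioo_mem_nhdsGT (by norm_num))).exists
  have hsmall : ∀ ρ < 1, ∀ δ > 0,
      ∀ᶠ k in atTop, ∀ u ∈ closedBall (0 : E n) ρ, ‖f k u‖ < δ := fun ρ hρ δ hδ =>
    (Metric.tendstoUniformlyOn_iff.1 (hconv _ (isCompact_closedBall 0 ρ)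
      (closedBall_subset_ball hρ)) δ hδ).mono fun k hk u hu => by simpa using hk u hu
  filter_upwards [hsmall (3 / 4) (by norm_num) 1 one_pos,
    hsmall (1 - s) (by linarith) (ε / 2) (half_pos hε)] with k hk₁ hk₂ z hz
  rw [Pi.zero_apply, dist_zero_left]
  calc ‖f k z‖ < ε / 2 + s * (8 + 4 * M * (1 - log s)) :=
        norm_lt_of_zygmund (hf k) (fun w hw => mul_norm_rad_rad_le_of_zygNorm_le (hM k).1
          (hM k).2 hw) (fun u hu => (hk₁ u hu).le) hs0.le hs.le hk₂ hz
    _ < ε := by linarith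

/-- **Lemma 3.** A bounded sequence in the Zygmund space converging to `0` uniformly on
compact subsets of the ball converges to `0` uniformly on the whole ball. -/
theorem unif_conv_on_ball (n : ℕ) (hn : 1 ≤ n) (f : ℕ → E n → ℂ)
    (hf : ∀ k, DifferentiableOn ℂ (f k) (uball n))
    (M : ℝ) (hM : ∀ k, memZ n (f k) ∧ zygNorm n (f k) ≤ M)
    (hconv : ∀ K : Set (E n), IsCompact K → K ⊆ uball n →
      TendstoUniformlyOn (fun k z => f k z) 0 atTop K) :
    TendstoUniformlyOn (fun k z => f k z) 0 atTop (uball n) :=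
  unif_conv_on_ball_general n f hf M hM hconv
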